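/- Let f₊(t) = a₃⁺t³ + a₂⁺t² + a₁⁺t + a₀⁺ and f₋(t) = a₃⁻t³ + a₂⁻t² + a₁⁻t + a₀⁻ with a₃⁺ > 0 > a₃⁻ and (a₂⁺ − a₂⁻)² = 3(a₃⁺ − a₃⁻)(a₁⁺ − a₁⁻). Set u₀ = −(a₂⁺ − a₂⁻)/(3(a₃⁺ − a₃⁻)), k₊ = √(a₃⁺/(a₃⁺ − a₃⁻)), and k₋ = √((−a₃⁻)/(a₃⁺ − a₃⁻)). Then for all real x₁, x₂: f₊'(x₁+x₂) − f₋'(x₁−x₂) − 2x₂·f₊''(x₁+x₂) = 3(a₃⁺ − a₃⁻)·(x₁ − u₀ − (1+2k₊)x₂)·(x₁ − u₀ − (1−2k₊)x₂), and f₊'(x₁+x₂) − f₋'(x₁−x₂) − 2x₂·f₋''(x₁−x₂) = 3(a₃⁺ − a₃⁻)·(x₁ − u₀ + (1+2k₋)x₂)·(x₁ − u₀ + (1−2k₋)x₂). -/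

import Mathlib

private lemma deriv_cubic (a b c d : ℝ) :
    deriv (fun t : ℝ => a * t ^ 3 + b * t ^ 2 + c * t + d)
      = fun t => 3 * a * t ^ 2 + 2 * b * t + c := by
  funext t
  have h : HasDerivAt (fun t : ℝ => a * t ^ 3 + b * t ^ 2 + c * t + d)
      (3 * a * t ^ 2 + 2 * b * t + c) t := by
    have := (((hasDerivAt_pow 3 t).const_mul a).add
      ((hasDerivAt_pow 2 t).const_mul b)).add
      (((hasDerivAt_id t).const_mul c).add_const d)
    convert this using 1
    · rfl
    · rfl
    · funext x; simp [id]; ring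
    · push_cast; ring
  exact h.deriv

private lemma deriv_quad (a b c : ℝ) :
    deriv (fun t : ℝ => a * t ^ 2 + b * t + c) = fun t => 2 * a * t + b := by
  funext t
  have h : HasDerivAt (fun t : ℝ => a * t ^ 2 + b * t + c)
      (2 * a * t + b) t := by
    have := ((hasDerivAt_pow 2 t).const_mul a).add
      (((hasDerivAt_id t).const_mul b).add_const c)
    convert this using 1
    · rfl
    · rfl
    · funext x; simp [id]; ring
    · push_cast; ring
  exact h.deriv

/-- in the zero-discriminant cubic case the quantities
`2x₂D₊(x)` and `2x₂D₋(x)` factor as products of two linear forms, so the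
zero sets of `D₊` and `D₋` are straight lines through `(u₀, 0)`. -/
theorem stmt_18 (a3p a2p a1p a0p a3m a2m a1m a0m : ℝ)
    (fp fm : ℝ → ℝ)
    (hfp : fp = fun t => a3p * t ^ 3 + a2p * t ^ 2 + a1p * t + a0p)
    (hfm : fm = fun t => a3m * t ^ 3 + a2m * t ^ 2 + a1m * t + a0m)
    (ha3p : 0 < a3p) (ha3m : a3m < 0)
    (hdisc : (a2p - a2m) ^ 2 = 3 * (a3p - a3m) * (a1p - a1m))
    (u₀ kp km : ℝ)
    (hu₀ : u₀ = -(a2p - a2m) / (3 * (a3p - a3m)))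
    (hkp : kp = Real.sqrt (a3p / (a3p - a3m)))
    (hkm : km = Real.sqrt (-a3m / (a3p - a3m))) :
    ∀ x₁ x₂ : ℝ,
      (deriv fp (x₁ + x₂) - deriv fm (x₁ - x₂) -
          2 * x₂ * deriv (deriv fp) (x₁ + x₂) =
        3 * (a3p - a3m) * (x₁ - u₀ - (1 + 2 * kp) * x₂) *
          (x₁ - u₀ - (1 - 2 * kp) * x₂)) ∧
      (deriv fp (x₁ + x₂) - deriv fm (x₁ - x₂) -
          2 * x₂ * deriv (deriv fm) (x₁ - x₂) =
        3 * (a3p - a3m) * (x₁ - u₀ + (1 + 2 * km) * x₂) *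
          (x₁ - u₀ + (1 - 2 * km) * x₂)) := by
  have hd : (0:ℝ) < a3p - a3m := by linarith
  have hkp2' : kp ^ 2 * (a3p - a3m) = a3p := by
    rw [hkp, Real.sq_sqrt (by positivity)]
    field_simp
  have hkm2' : km ^ 2 * (a3p - a3m) = -a3m := by
    rw [hkm, Real.sq_sqrt (div_nonneg (by linarith) hd.le)]
    field_simp
  have hu : u₀ * (3 * (a3p - a3m)) = -(a2p - a2m) := by
    rw [hu₀]; field_simp
  have hA : a2p - a2m = -(3 * (a3p - a3m) * u₀) := by linarith
  have h1 : a1p - a1m = 3 * (a3p - a3m) * u₀ ^ 2 := by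
    have h3 : 3 * (a3p - a3m) * (a1p - a1m)
        = 3 * (a3p - a3m) * (3 * (a3p - a3m) * u₀ ^ 2) := by
      rw [← hdisc, hA]; ring
    exact mul_left_cancel₀ (by positivity) h3
  subst hfp hfm
  rw [deriv_cubic, deriv_cubic, deriv_quad, deriv_quad]
  intro x₁ x₂
  constructor
  · simp only
    linear_combination (2 * x₁ - 2 * x₂) * hA + h1 + 12 * x₂ ^ 2 * hkp2'
  · simp only
    linear_combination (2 * x₁ + 2 * x₂) * hA + h1 + 12 * x₂ ^ 2 * hkm2'
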